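/- Let r ∈ (0, 1], α ∈ (0, 1/2), and t ≥ 0. Then ∫₀^t E[(1 + ξ_s)^{−1}] ds ≤ (1/r)·log(1 + r·t) + ∫₀^∞ ((1 + r·s)^{−3/2+α} + e^{−(r·s)^{2α}/8}) ds, where for each s > 0, ξ_s is a Poisson random variable with parameter r·s (and ξ_0 = 0). -/

import Mathlib

/-!
For `s > 0` the law of `ξ s` is `Po(r s)`, and summing the Poisson series gives
`E[(1 + ξ_s)⁻¹] = (1 - e^{-rs}) / (rs)`. This is at most `1 / l = (1 + l)⁻¹ + (l (1 + l))⁻¹`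
with `l = rs`, and the last term is at most `(1 + l)^{-3/2}` once `l ≥ 2`; for `l ≤ 2` the
trivial bound `1` is dominated by `(1 + l)⁻¹ + e^{-l^{2α}/8} ≥ 1/3 + 3/4`. Integrating over
`(0, t]`, the term `(1 + rs)⁻¹` contributes `(1/r) log(1 + rt)`, and the remaining nonnegative
terms are integrable on `(0, ∞)` because `-3/2 + α < -1`.
-/

open MeasureTheory ProbabilityTheory Real Set
open scoped NNReal Nat

lemma hasSum_pow_succ_div_factorial_succ (x : ℝ) :
    HasSum (fun n : ℕ ↦ x ^ (n + 1) / (n + 1)!) (exp x - 1) := by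
  rw [exp_eq_exp_ℝ]
  simpa using (hasSum_nat_add_iff' 1).mpr (NormedSpace.expSeries_div_hasSum_exp x)

lemma integral_inv_one_add_poissonMeasure {l : ℝ≥0} (hl : 0 < l) :
    ∫ n, ((1 : ℝ) + n)⁻¹ ∂Po(l) = (1 - exp (-l)) / l := by
  have hl' : (l : ℝ) ≠ 0 := by positivity
  have hterm : ∀ n : ℕ, (exp (-l) * l ^ n / n !) • ((1 : ℝ) + n)⁻¹
      = exp (-l) / l * (l ^ (n + 1) / (n + 1)!) := by
    intro n
    rw [smul_eq_mul, Nat.factorial_succ]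
    push_cast
    field_simp
    ring
  rw [integral_poissonMeasure, tsum_congr hterm,
    ((hasSum_pow_succ_div_factorial_succ l).mul_left _).tsum_eq, exp_neg]
  field_simp [(exp_pos (l : ℝ)).ne']

lemma hasLaw_poissonMeasure_of_measure_eq {Ω : Type*} [MeasurableSpace Ω] {μ : Measure Ω}
    {X : Ω → ℕ} (hX : Measurable X) {l : ℝ≥0}
    (hlaw : ∀ k : ℕ, μ {ω | X ω = k} = ENNReal.ofReal (exp (-l) * l ^ k / k !)) :
    HasLaw X Po(l) μ where
  aemeasurable := hX.aemeasurable
  map_eq := Measure.ext_iff_singleton.mpr fun k ↦ by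
    rw [Measure.map_apply hX (measurableSet_singleton k), poissonMeasure_singleton, ← hlaw k]
    rfl

lemma one_sub_exp_neg_div_le_one {l : ℝ} (hl : 0 < l) : (1 - exp (-l)) / l ≤ 1 := by
  rw [div_le_one hl]
  linarith [add_one_le_exp (-l)]

lemma inv_mul_one_add_le_rpow_neg_three_halves {l : ℝ} (hl : 2 ≤ l) :
    (l * (1 + l))⁻¹ ≤ (1 + l) ^ (-(3 : ℝ) / 2) := by
  have h1l : 0 < 1 + l := by linarith
  have hsqrt : √(1 + l) ≤ l := sqrt_le_iff.mpr ⟨by linarith, by nlinarith⟩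
  rw [show -(3 : ℝ) / 2 = -(1 + 1 / 2) by norm_num, rpow_neg h1l.le, rpow_add h1l, rpow_one,
    ← sqrt_eq_rpow, mul_comm l]
  gcongr

lemma one_sub_exp_neg_div_le {α l : ℝ} (hα0 : 0 ≤ α) (hα1 : α ≤ 1 / 2) (hl : 0 < l) :
    (1 - exp (-l)) / l ≤ (1 + l)⁻¹ + ((1 + l) ^ (-(3 : ℝ) / 2 + α) + exp (-l ^ (2 * α) / 8)) := by
  have h1l : 0 < 1 + l := by linarith
  rcases le_total l 2 with hl2 | hl2
  · have hpow : l ^ (2 * α) ≤ 2 := by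
      rcases le_total l 1 with hl1 | hl1
      · linarith [rpow_le_one hl.le hl1 (by linarith : 0 ≤ 2 * α)]
      · linarith [(rpow_le_rpow_of_exponent_le hl1 (by linarith : 2 * α ≤ 1)).trans_eq (rpow_one l)]
    have hinv : 1 / 3 ≤ (1 + l)⁻¹ := by
      rw [one_div]; exact inv_anti₀ h1l (by linarith)
    have hexp : 3 / 4 ≤ exp (-l ^ (2 * α) / 8) := by
      linarith [add_one_le_exp (-l ^ (2 * α) / 8)]
    have : 0 ≤ (1 + l) ^ (-(3 : ℝ) / 2 + α) := by positivity
    linarith [one_sub_exp_neg_div_le_one hl]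
  · have hsplit : 1 / l = (1 + l)⁻¹ + (l * (1 + l))⁻¹ := by field_simp; ring
    have hmono : (1 + l) ^ (-(3 : ℝ) / 2) ≤ (1 + l) ^ (-(3 : ℝ) / 2 + α) :=
      rpow_le_rpow_of_exponent_le (by linarith) (by linarith)
    have hnum : (1 - exp (-l)) / l ≤ 1 / l := by gcongr; linarith [exp_pos (-l)]
    linarith [inv_mul_one_add_le_rpow_neg_three_halves hl2, (exp_pos (-l ^ (2 * α) / 8)).le]

lemma integrableOn_Ioi_one_add_rpow_add_exp_neg_rpow {p β : ℝ} (hp : p < -1) (hβ : 0 < β) :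
    IntegrableOn (fun x : ℝ ↦ (1 + x) ^ p + exp (-x ^ β / 8)) (Ioi 0) := by
  have hpow : IntegrableOn (fun x : ℝ ↦ (1 + x) ^ p) (Ioi 0) := by
    simpa only [add_comm] using integrableOn_add_rpow_Ioi_of_lt hp (by norm_num : -(1 : ℝ) < 0)
  have hexp : IntegrableOn (fun x : ℝ ↦ exp (-x ^ β / 8)) (Ioi 0) := by
    refine (integrableOn_rpow_mul_exp_neg_mul_rpow (s := 0) (b := 1 / 8) (by norm_num) hβ
      (by norm_num)).congr_fun (fun x _ ↦ ?_) measurableSet_Ioi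
    simp only [rpow_zero, one_mul]
    ring_nf
  exact hpow.add hexp

lemma integral_inv_one_add_mul {r t : ℝ} (hr : r ≠ 0) (hrt : 0 < 1 + r * t) :
    ∫ s in (0 : ℝ)..t, (1 + r * s)⁻¹ = r⁻¹ * log (1 + r * t) := by
  rw [intervalIntegral.integral_comp_add_mul (fun x ↦ x⁻¹) hr, mul_zero, add_zero,
    integral_inv_of_pos one_pos hrt, div_one, smul_eq_mul]

theorem growth_factor_bound_general {Ω : Type*} [MeasurableSpace Ω]
    (μ : Measure Ω) [IsProbabilityMeasure μ]
    (r α t : ℝ) (hr0 : 0 < r) (hα0 : 0 < α) (hα1 : α < 1 / 2) (ht : 0 ≤ t)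
    (ξ : ℝ → Ω → ℕ) (hmeas : ∀ s, Measurable (ξ s))
    (hpois : ∀ s : ℝ, 0 < s → ∀ k : ℕ,
      μ {ω | ξ s ω = k} =
        ENNReal.ofReal (Real.exp (-(r * s)) * (r * s) ^ k / (Nat.factorial k))) :
    ∫ s in (0:ℝ)..t, (∫ ω, ((1 : ℝ) + (ξ s ω : ℝ))⁻¹ ∂μ) ≤
      (1 / r) * Real.log (1 + r * t) +
      ∫ s in Set.Ioi (0:ℝ),
        ((1 + r * s) ^ (-(3:ℝ) / 2 + α) + Real.exp (-(r * s) ^ (2 * α) / 8)) := by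
  set G : ℝ → ℝ := fun s ↦ (1 + r * s) ^ (-(3 : ℝ) / 2 + α) + exp (-(r * s) ^ (2 * α) / 8)
  have hG : IntegrableOn G (Ioi 0) := by
    have := integrableOn_Ioi_one_add_rpow_add_exp_neg_rpow (p := -(3 : ℝ) / 2 + α)
      (β := 2 * α) (by linarith) (by linarith)
    rwa [← mul_zero r, ← integrableOn_Ioi_comp_mul_left_iff _ _ hr0] at this
  have hinv : IntegrableOn (fun s ↦ (1 + r * s)⁻¹) (Ioc 0 t) := by
    rw [← intervalIntegrable_iff_integrableOn_Ioc_of_le ht]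
    refine intervalIntegral.intervalIntegrable_inv (fun s hs ↦ ?_) (by fun_prop)
    rw [uIcc_of_le ht] at hs
    nlinarith [hs.1]
  have hmean : ∀ s ∈ Ioc 0 t, ∫ ω, (1 + (ξ s ω : ℝ))⁻¹ ∂μ ≤ (1 + r * s)⁻¹ + G s := by
    intro s hs
    have hrs : 0 < r * s := mul_pos hr0 hs.1
    have hlaw := hasLaw_poissonMeasure_of_measure_eq (hmeas s) (l := ⟨r * s, hrs.le⟩) (hpois s hs.1)
    calc ∫ ω, (1 + (ξ s ω : ℝ))⁻¹ ∂μ = ∫ n, ((1 : ℝ) + n)⁻¹ ∂Po(⟨r * s, hrs.le⟩) :=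
          hlaw.integral_comp (f := fun n : ℕ ↦ ((1 : ℝ) + n)⁻¹) .of_discrete
      _ = (1 - exp (-(r * s))) / (r * s) := integral_inv_one_add_poissonMeasure hrs
      _ ≤ (1 + r * s)⁻¹ + G s := one_sub_exp_neg_div_le hα0.le hα1.le hrs
  rw [intervalIntegral.integral_of_le ht]
  calc ∫ s in Ioc 0 t, ∫ ω, (1 + (ξ s ω : ℝ))⁻¹ ∂μ
      ≤ ∫ s in Ioc 0 t, ((1 + r * s)⁻¹ + G s) :=
        integral_mono_of_nonneg (ae_of_all _ fun s ↦ integral_nonneg fun ω ↦ by positivity)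
          (hinv.add (hG.mono_set Ioc_subset_Ioi_self))
          ((ae_restrict_iff' measurableSet_Ioc).mpr (ae_of_all _ hmean))
    _ = (∫ s in (0 : ℝ)..t, (1 + r * s)⁻¹) + ∫ s in Ioc 0 t, G s := by
        rw [integral_add hinv (hG.mono_set Ioc_subset_Ioi_self), intervalIntegral.integral_of_le ht]
    _ ≤ (1 / r) * log (1 + r * t) + ∫ s in Ioi 0, G s := by
        rw [integral_inv_one_add_mul hr0.ne' (by positivity), one_div]
        gcongr
        · filter_upwards [ae_restrict_mem measurableSet_Ioi] with s hs
          have : 0 < 1 + r * s := by nlinarith [mem_Ioi.mp hs]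
          positivity
        · exact Ioc_subset_Ioi_self

/-- For a family `ξ_s` of Poisson(r·s) random variables (with `ξ_0 = 0`),
`∫₀^t E[(1+ξ_s)⁻¹] ds ≤ (1/r)·log(1+rt) + ∫₀^∞ ((1+rs)^{−3/2+α} + e^{−(rs)^{2α}/8}) ds`. -/
theorem growth_factor_bound {Ω : Type*} [MeasurableSpace Ω]
    (μ : Measure Ω) [IsProbabilityMeasure μ]
    (r α t : ℝ) (hr0 : 0 < r) (hr1 : r ≤ 1) (hα0 : 0 < α) (hα1 : α < 1 / 2) (ht : 0 ≤ t)
    (ξ : ℝ → Ω → ℕ) (hmeas : ∀ s, Measurable (ξ s)) (hξ0 : ∀ ω, ξ 0 ω = 0)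
    (hpois : ∀ s : ℝ, 0 < s → ∀ k : ℕ,
      μ {ω | ξ s ω = k} =
        ENNReal.ofReal (Real.exp (-(r * s)) * (r * s) ^ k / (Nat.factorial k))) :
    ∫ s in (0:ℝ)..t, (∫ ω, ((1 : ℝ) + (ξ s ω : ℝ))⁻¹ ∂μ) ≤
      (1 / r) * Real.log (1 + r * t) +
      ∫ s in Set.Ioi (0:ℝ),
        ((1 + r * s) ^ (-(3:ℝ) / 2 + α) + Real.exp (-(r * s) ^ (2 * α) / 8)) :=
  growth_factor_bound_general μ r α t hr0 hα0 hα1 ht ξ hmeas hpois
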